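/- (L¹-stability.) If the CFL condition λ ≤ min{(8 − 27α)/(27L), 2/(27L), α/L} holds, then the MUSCL–Hancock update conserves mass and the discrete L¹ norm: Σ_{j∈ℤ} ρ'_j = Σ_{j∈ℤ} ρ_j and Σ_{j∈ℤ} |ρ'_j| = Σ_{j∈ℤ} |ρ_j|. -/

import Mathlib

open MeasureTheory

noncomputable section

/-- minmod limiter of three arguments. -/
def minmod3 (a b c : ℝ) : ℝ :=
  if 0 < a ∧ 0 < b ∧ 0 < c then min a (min b c)
  else if a < 0 ∧ b < 0 ∧ c < 0 then max a (max b c)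
  else 0

/-- MUSCL slopes `σ_j = 2θ·minmod(ρ_j − ρ_{j−1}, (ρ_{j+1} − ρ_{j−1})/2, ρ_{j+1} − ρ_j)`. -/
def slp (θ : ℝ) (ρ : ℤ → ℝ) (j : ℤ) : ℝ :=
  2 * θ * minmod3 (ρ j - ρ (j - 1)) ((ρ (j + 1) - ρ (j - 1)) / 2) (ρ (j + 1) - ρ j)

/-- left interface value `ρ⁻_{j+1/2} = ρ_j + σ_j/2`. -/
def intL (θ : ℝ) (ρ : ℤ → ℝ) (j : ℤ) : ℝ := ρ j + slp θ ρ j / 2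

/-- right interface value `ρ⁺_{j−1/2} = ρ_j − σ_j/2`. -/
def intR (θ : ℝ) (ρ : ℤ → ℝ) (j : ℤ) : ℝ := ρ j - slp θ ρ j / 2

/-- discrete convolution `A_j = Δx·Σ_l μ((j−l)Δx)·ρ_l`. -/
def Adisc (μ : ℝ → ℝ) (Δx : ℝ) (ρ : ℤ → ℝ) (j : ℤ) : ℝ :=
  Δx * ∑' l : ℤ, μ (((j : ℝ) - (l : ℝ)) * Δx) * ρ l

/-- `s_j = θ·(A_{j+1} − A_{j−1})`. -/
def sdisc (μ : ℝ → ℝ) (θ Δx : ℝ) (ρ : ℤ → ℝ) (j : ℤ) : ℝ :=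
  θ * (Adisc μ Δx ρ (j + 1) - Adisc μ Δx ρ (j - 1))

/-- `A⁻_{j+1/2} = A_j + s_j/2`. -/
def AdiscL (μ : ℝ → ℝ) (θ Δx : ℝ) (ρ : ℤ → ℝ) (j : ℤ) : ℝ :=
  Adisc μ Δx ρ j + sdisc μ θ Δx ρ j / 2

/-- `A⁺_{j−1/2} = A_j − s_j/2`. -/
def AdiscR (μ : ℝ → ℝ) (θ Δx : ℝ) (ρ : ℤ → ℝ) (j : ℤ) : ℝ :=
  Adisc μ Δx ρ j - sdisc μ θ Δx ρ j / 2

/-- mid-time value `ρ^{½,−}_{j+1/2}`. -/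
def midL (f : ℝ → ℝ → ℝ) (μ : ℝ → ℝ) (θ lam Δx : ℝ) (ρ : ℤ → ℝ) (j : ℤ) : ℝ :=
  intL θ ρ j - lam / 2 *
    (f (intL θ ρ j) (AdiscL μ θ Δx ρ j) - f (intR θ ρ j) (AdiscR μ θ Δx ρ j))

/-- mid-time value `ρ^{½,+}_{j−1/2}`. -/
def midR (f : ℝ → ℝ → ℝ) (μ : ℝ → ℝ) (θ lam Δx : ℝ) (ρ : ℤ → ℝ) (j : ℤ) : ℝ :=
  intR θ ρ j - lam / 2 *
    (f (intL θ ρ j) (AdiscL μ θ Δx ρ j) - f (intR θ ρ j) (AdiscR μ θ Δx ρ j))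

/-- mid-time convolution `A^{½}_{j+1/2}`. -/
def Amid (f : ℝ → ℝ → ℝ) (μ : ℝ → ℝ) (θ lam Δx : ℝ) (ρ : ℤ → ℝ) (j : ℤ) : ℝ :=
  Δx / 2 * ∑' l : ℤ,
    (μ (((j : ℝ) + 1 - (l : ℝ)) * Δx) * midR f μ θ lam Δx ρ l +
     μ (((j : ℝ) - (l : ℝ)) * Δx) * midL f μ θ lam Δx ρ l)

/-- Lax–Friedrichs type numerical flux `F(u,v,A)`. -/
def numFlux (f : ℝ → ℝ → ℝ) (α lam u v A : ℝ) : ℝ :=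
  (f u A + f v A) / 2 - α * (v - u) / (2 * lam)

/-- MUSCL–Hancock update `ρ'_j`. -/
def mhUpdate (f : ℝ → ℝ → ℝ) (μ : ℝ → ℝ) (θ α lam Δx : ℝ) (ρ : ℤ → ℝ) (j : ℤ) : ℝ :=
  ρ j - lam *
    (numFlux f α lam (midL f μ θ lam Δx ρ j) (midR f μ θ lam Δx ρ (j + 1))
        (Amid f μ θ lam Δx ρ j) -
     numFlux f α lam (midL f μ θ lam Δx ρ (j - 1)) (midR f μ θ lam Δx ρ j)
        (Amid f μ θ lam Δx ρ (j - 1)))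


/-! The MUSCL–Hancock scheme is conservative and, under the CFL condition, positivity preserving;
for a nonnegative density the `ℓ¹` norm is the mass, so it is conserved too.

Positivity: by the minmod limiter the interface values are at least `(1 - θ) ρ_j ≥ ρ_j / 2`, and the
half-step predictor moves them by at most `λ L ρ_j`, so the mid-time values `P_j = ρ^{½,−}_{j+1/2}`,
`Q_j = ρ^{½,+}_{j−1/2}` are nonnegative with `P_j + Q_j ≤ (2 + 2λL) ρ_j`. Since `|f(u, A)| ≤ L |u|`,
the Lax–Friedrichs flux satisfies
`(α − λL)/2 · u − (α + λL)/2 · v ≤ λ F(u, v, A) ≤ (α + λL)/2 · u − (α − λL)/2 · v` for `u, v ≥ 0`,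
whence `ρ'_j ≥ ρ_j − (α + λL)/2 · (P_j + Q_j) ≥ (1 − (α + λL)(1 + λL)) ρ_j ≥ 0`. -/

lemma abs_le_mul_abs_of_abs_deriv_le {g : ℝ → ℝ} {L : ℝ} (hg : Differentiable ℝ g)
    (hg0 : g 0 = 0) (hL : ∀ r, |deriv g r| ≤ L) (u : ℝ) : |g u| ≤ L * |u| := by
  simpa [hg0, Real.norm_eq_abs] using
    Convex.norm_image_sub_le_of_norm_deriv_le (fun x _ => hg x) (fun x _ => hL x) convex_univ
      (Set.mem_univ 0) (Set.mem_univ u)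

lemma minmod3_mem_uIcc (a b c : ℝ) :
    minmod3 a b c ∈ Set.uIcc 0 a ∧ minmod3 a b c ∈ Set.uIcc 0 c := by
  unfold minmod3
  split_ifs with hpos hneg
  · have : 0 < min a (min b c) := lt_min hpos.1 (lt_min hpos.2.1 hpos.2.2)
    exact ⟨Set.mem_uIcc.2 (Or.inl ⟨this.le, min_le_left _ _⟩),
      Set.mem_uIcc.2 (Or.inl ⟨this.le, (min_le_right _ _).trans (min_le_right _ _)⟩)⟩
  · have : max a (max b c) < 0 := max_lt hneg.1 (max_lt hneg.2.1 hneg.2.2)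
    exact ⟨Set.mem_uIcc.2 (Or.inr ⟨le_max_left _ _, this.le⟩),
      Set.mem_uIcc.2 (Or.inr ⟨(le_max_right b c).trans (le_max_right _ _), this.le⟩)⟩
  · exact ⟨Set.left_mem_uIcc, Set.left_mem_uIcc⟩

section Scheme

variable {f : ℝ → ℝ → ℝ} {μ : ℝ → ℝ} {θ α lam Δx L : ℝ} {ρ : ℤ → ℝ}

lemma intL_add_intR (j : ℤ) : intL θ ρ j + intR θ ρ j = 2 * ρ j := by
  unfold intL intR; ring

lemma one_sub_mul_le_intL (hθ : 0 ≤ θ) {j : ℤ} (hj : 0 ≤ ρ j) (hj' : 0 ≤ ρ (j + 1)) :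
    (1 - θ) * ρ j ≤ intL θ ρ j := by
  have hm := Set.mem_uIcc.1 (minmod3_mem_uIcc (ρ j - ρ (j - 1))
    ((ρ (j + 1) - ρ (j - 1)) / 2) (ρ (j + 1) - ρ j)).2
  have : -ρ j ≤ minmod3 (ρ j - ρ (j - 1)) ((ρ (j + 1) - ρ (j - 1)) / 2) (ρ (j + 1) - ρ j) := by
    rcases hm with h | h <;> linarith [h.1]
  unfold intL slp
  nlinarith

lemma one_sub_mul_le_intR (hθ : 0 ≤ θ) {j : ℤ} (hj' : 0 ≤ ρ (j - 1)) (hj : 0 ≤ ρ j) :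
    (1 - θ) * ρ j ≤ intR θ ρ j := by
  have hm := Set.mem_uIcc.1 (minmod3_mem_uIcc (ρ j - ρ (j - 1))
    ((ρ (j + 1) - ρ (j - 1)) / 2) (ρ (j + 1) - ρ j)).1
  have : minmod3 (ρ j - ρ (j - 1)) ((ρ (j + 1) - ρ (j - 1)) / 2) (ρ (j + 1) - ρ j) ≤ ρ j := by
    rcases hm with h | h <;> linarith [h.2]
  unfold intR slp
  nlinarith

def predictorIncrement (f : ℝ → ℝ → ℝ) (μ : ℝ → ℝ) (θ lam Δx : ℝ) (ρ : ℤ → ℝ) (j : ℤ) : ℝ :=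
  lam / 2 * (f (intL θ ρ j) (AdiscL μ θ Δx ρ j) - f (intR θ ρ j) (AdiscR μ θ Δx ρ j))

lemma midL_eq_sub (j : ℤ) :
    midL f μ θ lam Δx ρ j = intL θ ρ j - predictorIncrement f μ θ lam Δx ρ j := rfl

lemma midR_eq_sub (j : ℤ) :
    midR f μ θ lam Δx ρ j = intR θ ρ j - predictorIncrement f μ θ lam Δx ρ j := rfl

lemma abs_predictorIncrement_le (habs : ∀ u A, |f u A| ≤ L * |u|) (hlam : 0 ≤ lam) {j : ℤ}
    (hintL : 0 ≤ intL θ ρ j) (hintR : 0 ≤ intR θ ρ j) :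
    |predictorIncrement f μ θ lam Δx ρ j| ≤ lam * L * ρ j := by
  have hfL := habs (intL θ ρ j) (AdiscL μ θ Δx ρ j)
  have hfR := habs (intR θ ρ j) (AdiscR μ θ Δx ρ j)
  rw [abs_of_nonneg hintL] at hfL
  rw [abs_of_nonneg hintR] at hfR
  calc |predictorIncrement f μ θ lam Δx ρ j|
      = lam / 2 * |f (intL θ ρ j) (AdiscL μ θ Δx ρ j) - f (intR θ ρ j) (AdiscR μ θ Δx ρ j)| := by
        rw [predictorIncrement, abs_mul, abs_of_nonneg (by positivity)]
    _ ≤ lam / 2 * (L * intL θ ρ j + L * intR θ ρ j) := by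
        gcongr
        exact (abs_sub _ _).trans (by gcongr)
    _ = lam * L * ρ j := by rw [← mul_add, intL_add_intR]; ring

lemma mid_nonneg_and_add_le (habs : ∀ u A, |f u A| ≤ L * |u|) (hθ0 : 0 ≤ θ) (hθ1 : θ ≤ 1 / 2)
    (hlam : 0 ≤ lam) (hK : lam * L ≤ 2 / 27) (hρ : ∀ j, 0 ≤ ρ j) (j : ℤ) :
    0 ≤ midL f μ θ lam Δx ρ j ∧ 0 ≤ midR f μ θ lam Δx ρ j ∧
      midL f μ θ lam Δx ρ j + midR f μ θ lam Δx ρ j ≤ (2 + 2 * (lam * L)) * ρ j := by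
  have hintL := one_sub_mul_le_intL hθ0 (hρ j) (hρ (j + 1))
  have hintR := one_sub_mul_le_intR hθ0 (hρ (j - 1)) (hρ j)
  have hsum := intL_add_intR (θ := θ) (ρ := ρ) j
  have hhalf : ρ j / 2 ≤ (1 - θ) * ρ j := by nlinarith [hρ j]
  have hD := abs_le.1 (abs_predictorIncrement_le (μ := μ) (Δx := Δx) habs hlam
    (by linarith [hρ j]) (by linarith [hρ j]))
  have hKρ : lam * L * ρ j ≤ 2 / 27 * ρ j := mul_le_mul_of_nonneg_right hK (hρ j)
  rw [midL_eq_sub, midR_eq_sub]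
  exact ⟨by linarith, by linarith, by linarith⟩

lemma lam_mul_numFlux (hlam : lam ≠ 0) (u v A : ℝ) :
    lam * numFlux f α lam u v A = lam / 2 * (f u A + f v A) - α / 2 * (v - u) := by
  unfold numFlux; field_simp

lemma lam_mul_numFlux_le (habs : ∀ u A, |f u A| ≤ L * |u|) (hlam : 0 < lam) {u v : ℝ}
    (hu : 0 ≤ u) (hv : 0 ≤ v) (A : ℝ) :
    lam * numFlux f α lam u v A ≤ (α + lam * L) / 2 * u - (α - lam * L) / 2 * v := by
  have hfu := (le_abs_self _).trans ((habs u A).trans_eq (by rw [abs_of_nonneg hu]))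
  have hfv := (le_abs_self _).trans ((habs v A).trans_eq (by rw [abs_of_nonneg hv]))
  rw [lam_mul_numFlux hlam.ne']
  nlinarith

lemma le_lam_mul_numFlux (habs : ∀ u A, |f u A| ≤ L * |u|) (hlam : 0 < lam) {u v : ℝ}
    (hu : 0 ≤ u) (hv : 0 ≤ v) (A : ℝ) :
    (α - lam * L) / 2 * u - (α + lam * L) / 2 * v ≤ lam * numFlux f α lam u v A := by
  have hfu := (neg_abs_le _).trans' (neg_le_neg ((habs u A).trans_eq (by rw [abs_of_nonneg hu])))
  have hfv := (neg_abs_le _).trans' (neg_le_neg ((habs v A).trans_eq (by rw [abs_of_nonneg hv])))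
  rw [lam_mul_numFlux hlam.ne']
  nlinarith

lemma abs_lam_mul_numFlux_le (habs : ∀ u A, |f u A| ≤ L * |u|) (hlam : 0 < lam) (hα : 0 ≤ α)
    {u v : ℝ} (hu : 0 ≤ u) (hv : 0 ≤ v) (A : ℝ) :
    |lam * numFlux f α lam u v A| ≤ (α + lam * L) / 2 * (u + v) :=
  abs_le.2 ⟨by nlinarith [le_lam_mul_numFlux (α := α) habs hlam hu hv A],
    by nlinarith [lam_mul_numFlux_le (α := α) habs hlam hu hv A]⟩

/-- The numerical flux through the interface `j + 1/2`. -/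
def mhFlux (f : ℝ → ℝ → ℝ) (μ : ℝ → ℝ) (θ α lam Δx : ℝ) (ρ : ℤ → ℝ) (j : ℤ) : ℝ :=
  numFlux f α lam (midL f μ θ lam Δx ρ j) (midR f μ θ lam Δx ρ (j + 1)) (Amid f μ θ lam Δx ρ j)

lemma mhUpdate_eq (j : ℤ) :
    mhUpdate f μ θ α lam Δx ρ j =
      ρ j - lam * (mhFlux f μ θ α lam Δx ρ j - mhFlux f μ θ α lam Δx ρ (j - 1)) := by
  simp only [mhUpdate, mhFlux, sub_add_cancel]

lemma mhUpdate_nonneg (habs : ∀ u A, |f u A| ≤ L * |u|) (hθ0 : 0 ≤ θ) (hθ1 : θ ≤ 1 / 2)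
    (hlam : 0 < lam) (hL : 0 ≤ L) (hK : lam * L ≤ 2 / 27) (hKα : lam * L + α ≤ 8 / 27)
    (hαK : lam * L ≤ α) (hρ : ∀ j, 0 ≤ ρ j) (j : ℤ) : 0 ≤ mhUpdate f μ θ α lam Δx ρ j := by
  have hmid := mid_nonneg_and_add_le (μ := μ) (Δx := Δx) habs hθ0 hθ1 hlam.le hK hρ
  obtain ⟨hP, hQ, hPQ⟩ := hmid j
  obtain ⟨hS, -, -⟩ := hmid (j - 1)
  obtain ⟨-, hR, -⟩ := hmid (j + 1)
  have hout := lam_mul_numFlux_le (α := α) habs hlam hP hR (Amid f μ θ lam Δx ρ j)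
  have hin := le_lam_mul_numFlux (α := α) habs hlam hS hQ (Amid f μ θ lam Δx ρ (j - 1))
  have hK0 : 0 ≤ lam * L := mul_nonneg hlam.le hL
  have hcoef : (α + lam * L) / 2 * ((2 + 2 * (lam * L)) * ρ j) ≤ ρ j := by
    have : (α + lam * L) * (1 + lam * L) ≤ 1 := by nlinarith
    nlinarith [hρ j]
  rw [mhUpdate_eq, mul_sub]
  simp only [mhFlux, sub_add_cancel]
  nlinarith [mul_le_mul_of_nonneg_left hPQ (by linarith : 0 ≤ (α + lam * L) / 2),
    mul_nonneg (by linarith : 0 ≤ (α - lam * L) / 2) hS,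
    mul_nonneg (by linarith : 0 ≤ (α - lam * L) / 2) hR]

lemma summable_lam_mul_mhFlux (habs : ∀ u A, |f u A| ≤ L * |u|) (hθ0 : 0 ≤ θ) (hθ1 : θ ≤ 1 / 2)
    (hlam : 0 < lam) (hα : 0 ≤ α) (hL : 0 ≤ L) (hK : lam * L ≤ 2 / 27) (hρ : ∀ j, 0 ≤ ρ j)
    (hsum : Summable ρ) : Summable fun j => lam * mhFlux f μ θ α lam Δx ρ j := by
  have hshift : Summable fun j => ρ (j + 1) := (Equiv.addRight (1 : ℤ)).summable_iff.2 hsum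
  refine Summable.of_norm_bounded
    (((hsum.add hshift).mul_left (2 + 2 * (lam * L))).mul_left ((α + lam * L) / 2)) fun j => ?_
  have hmid := mid_nonneg_and_add_le (μ := μ) (Δx := Δx) habs hθ0 hθ1 hlam.le hK hρ
  obtain ⟨hP, hQ, hPQ⟩ := hmid j
  obtain ⟨hP', hR, hPR⟩ := hmid (j + 1)
  calc ‖lam * mhFlux f μ θ α lam Δx ρ j‖
      ≤ (α + lam * L) / 2 * (midL f μ θ lam Δx ρ j + midR f μ θ lam Δx ρ (j + 1)) :=
        abs_lam_mul_numFlux_le habs hlam hα hP hR _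
    _ ≤ (α + lam * L) / 2 * ((2 + 2 * (lam * L)) * (ρ j + ρ (j + 1))) := by
        gcongr
        linarith

end Scheme

lemma tsum_sub_sub_comp_sub_one {ρ G : ℤ → ℝ} (hρ : Summable ρ) (hG : Summable G) :
    ∑' j, (ρ j - (G j - G (j - 1))) = ∑' j, ρ j := by
  have hG' : Summable fun j => G (j - 1) := (Equiv.subRight (1 : ℤ)).summable_iff.2 hG
  have hshift : ∑' j, G (j - 1) = ∑' j, G j := (Equiv.subRight (1 : ℤ)).tsum_eq G
  rw [hρ.tsum_sub (hG.sub hG'), hG.tsum_sub hG', hshift, sub_self, sub_zero]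

lemma cfl_bounds {lam α L : ℝ} (hlam : 0 < lam) (hL : 0 ≤ L)
    (hCFL : lam ≤ min ((8 - 27 * α) / (27 * L)) (min (2 / (27 * L)) (α / L))) :
    lam * L ≤ 2 / 27 ∧ lam * L + α ≤ 8 / 27 ∧ lam * L ≤ α := by
  obtain ⟨h₁, h₂, h₃⟩ : lam ≤ (8 - 27 * α) / (27 * L) ∧ lam ≤ 2 / (27 * L) ∧ lam ≤ α / L := by
    simpa only [le_min_iff] using hCFL
  have hL : 0 < L := hL.lt_of_ne fun h => by rw [← h, div_zero] at h₃; linarith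
  rw [le_div_iff₀ (by positivity)] at h₁ h₂
  rw [le_div_iff₀ hL] at h₃
  exact ⟨by linarith, by linarith, h₃⟩

theorem stmt5_general (f : ℝ → ℝ → ℝ) (μ : ℝ → ℝ) (Δx Δt lam θ α L : ℝ)
    (hΔx : 0 < Δx) (hΔt : 0 < Δt) (hlam : lam = Δt / Δx)
    (hθ0 : 0 ≤ θ) (hθ1 : θ ≤ 1 / 2) (hα0 : 0 < α)
    (hf : ContDiff ℝ 2 (Function.uncurry f)) (hf0 : ∀ A : ℝ, f 0 A = 0)
    (hL : ∀ r A : ℝ, |deriv (fun x => f x A) r| ≤ L)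
    (hCFL : lam ≤ min ((8 - 27 * α) / (27 * L)) (min (2 / (27 * L)) (α / L)))
    (ρ : ℤ → ℝ) (hρ : ∀ j : ℤ, 0 ≤ ρ j) (hsum : Summable ρ) :
    (∑' j : ℤ, mhUpdate f μ θ α lam Δx ρ j) = ∑' j : ℤ, ρ j ∧
    (∑' j : ℤ, |mhUpdate f μ θ α lam Δx ρ j|) = ∑' j : ℤ, |ρ j| := by
  have hlam0 : 0 < lam := hlam ▸ div_pos hΔt hΔx
  have hL0 : 0 ≤ L := (abs_nonneg _).trans (hL 0 0)
  obtain ⟨hK, hKα, hαK⟩ := cfl_bounds hlam0 hL0 hCFL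
  have habs : ∀ u A, |f u A| ≤ L * |u| := fun u A =>
    abs_le_mul_abs_of_abs_deriv_le
      (fun x => ((hf.differentiable two_ne_zero).comp (differentiable_id.prodMk
        (differentiable_const A))) x) (hf0 A) (fun r => hL r A) u
  have hmass : (∑' j, mhUpdate f μ θ α lam Δx ρ j) = ∑' j, ρ j := by
    simp only [mhUpdate_eq, mul_sub]
    exact tsum_sub_sub_comp_sub_one hsum
      (summable_lam_mul_mhFlux habs hθ0 hθ1 hlam0 hα0.le hL0 hK hρ hsum)
  refine ⟨hmass, ?_⟩
  simp only [abs_of_nonneg (hρ _),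
    abs_of_nonneg (mhUpdate_nonneg habs hθ0 hθ1 hlam0 hL0 hK hKα hαK hρ _), hmass]

/-- L¹-stability (mass conservation) of the MUSCL–Hancock update. -/
theorem stmt5 (f : ℝ → ℝ → ℝ) (μ : ℝ → ℝ) (Δx Δt lam θ α L : ℝ)
    (hΔx : 0 < Δx) (hΔt : 0 < Δt) (hlam : lam = Δt / Δx)
    (hθ0 : 0 ≤ θ) (hθ1 : θ ≤ 1 / 2) (hα0 : 0 < α) (hα1 : α < 8 / 27)
    (hf : ContDiff ℝ 2 (Function.uncurry f)) (hf0 : ∀ A : ℝ, f 0 A = 0)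
    (hL : ∀ r A : ℝ, |deriv (fun x => f x A) r| ≤ L)
    (hμ : ContDiff ℝ 2 μ) (hμc : HasCompactSupport μ)
    (hCFL : lam ≤ min ((8 - 27 * α) / (27 * L)) (min (2 / (27 * L)) (α / L)))
    (ρ : ℤ → ℝ) (hρ : ∀ j : ℤ, 0 ≤ ρ j) (hsum : Summable ρ) :
    (∑' j : ℤ, mhUpdate f μ θ α lam Δx ρ j) = ∑' j : ℤ, ρ j ∧
    (∑' j : ℤ, |mhUpdate f μ θ α lam Δx ρ j|) = ∑' j : ℤ, |ρ j| :=
  stmt5_general f μ Δx Δt lam θ α L hΔx hΔt hlam hθ0 hθ1 hα0 hf hf0 hL hCFL ρ hρ hsum
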